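/- Let H be a Hopf algebra, L ⊆ H a Hopf subalgebra, (ρ, V) and (σ, Σ) representations of H and L respectively, and {X_i}_{i=1}^m, {X^i}_{i=1}^m dual bases (⟨X_i,X^j⟩ = δ_ij for an ad-invariant nondegenerate pairing as above) of ad(L)-invariant subspaces u₋, u₊ of H. Let γ : u₊ → End(Σ) be L-equivariant: γ(ad(Y)X) = σ(Y₍₁₎) γ(X) σ(S(Y₍₂₎)) for Y ∈ L. Then for every linear map A : V → Σ intertwining the L-actions twisted by the antipode (A ∘ ρ(S(Y)) = σ(S(Y)) ∘ A for all Y ∈ L), the map D₋(A) := -Σ_i γ(X^i) ∘ A ∘ ρ(X_i) again satisfies D₋(A) ∘ ρ(S(Y)) = σ(S(Y)) ∘ D₋(A) for all Y ∈ L. -/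

import Mathlib

open TensorProduct Coalgebra HopfAlgebra

/-- The adjoint action of a Hopf algebra on itself:
`ad X Y = X₍₁₎ * Y * S(X₍₂₎)` in Sweedler notation. -/
noncomputable def ad (k : Type*) {H : Type*} [CommSemiring k] [Semiring H]
    [HopfAlgebra k H] (X Y : H) : H :=
  LinearMap.mul' k H
    ((TensorProduct.map LinearMap.id
      ((LinearMap.mulLeft k Y).comp (antipode (R := k)))) (comul X))

/-!
Write `x S(Y) = S(Y₁) ad(Y₂)(x)`; pushing `ρ(S(Y₁))` through `A` turns `D₋(A) ρ(S(Y))` into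
`-∑ γ(Xⁱ) σ(S(Y₁)) A ρ(ad(Y₂) Xᵢ)`. Invariance of the pairing moves `ad(Y₂)` off `Xᵢ` and onto
`Xⁱ` as `ad(S(Y₂))`, and it remains to see `∑ γ(ad(S(Y₂)) Xⁱ) σ(S(Y₁)) = σ(S(Y)) γ(Xⁱ)`.
This needs no formula for the coproduct of `S(Y₂)`: equivariance of `γ` first rewrites
`γ(X) σ(S(y))` as `σ(S(y₁)) γ(ad(y₂) X)`, after which coassociativity and `y₁ S(y₂) = ε(y)`
collapse the sum. Since `σ` lives only on `L`, these tensor computations are carried out with a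
linear extension of `σ` to `H`.
-/

section Hopf

variable {k H : Type*} [CommSemiring k] [Semiring H] [HopfAlgebra k H]

lemma sum_antipode_mul_tmul_eq {a : H} {ι : Type*} {κ : ι → Type*} (r : Repr k a ι)
    (r₂ : ∀ i, Repr k (r.right i) (κ i)) :
    ∑ i ∈ r.index, ∑ j ∈ (r₂ i).index,
      (antipode k (r.left i) * (r₂ i).left j) ⊗ₜ[k] (r₂ i).right j = 1 ⊗ₜ a := by
  have h := congr((TensorProduct.map (LinearMap.mul' k H ∘ₗ map (antipode k) .id) .id ∘ₗ
    (TensorProduct.assoc k H H H).symm.toLinearMap)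
    $(sum_tmul_tmul_eq r (fun i ↦ ℛ k (r.left i)) r₂))
  simp only [map_sum, LinearMap.comp_apply, LinearEquiv.coe_coe, assoc_symm_tmul, map_tmul,
    LinearMap.mul'_apply, LinearMap.id_apply] at h
  rw [← h]
  simp only [← sum_tmul, sum_antipode_mul_eq_smul, smul_tmul]
  rw [← tmul_sum, sum_counit_smul]

lemma sum_counit_right_smul {a : H} {ι : Type*} (r : Repr k a ι) :
    ∑ i ∈ r.index, counit (R := k) (r.right i) • r.left i = a := by
  have h := congr(TensorProduct.rid k H $(sum_tmul_counit_eq r))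
  simpa only [map_sum, rid_tmul, one_smul] using h

lemma sum_tmul_mul_antipode_eq {a : H} {ι : Type*} {κ : ι → Type*} (r : Repr k a ι)
    (r₁ : ∀ i, Repr k (r.left i) (κ i)) :
    ∑ i ∈ r.index, ∑ j ∈ (r₁ i).index,
      (r₁ i).left j ⊗ₜ[k] ((r₁ i).right j * antipode k (r.right i)) = a ⊗ₜ 1 := by
  have h := congr((TensorProduct.map .id (LinearMap.mul' k H ∘ₗ map .id (antipode k)))
    $(sum_tmul_tmul_eq r r₁ (fun i ↦ ℛ k (r.right i))))
  simp only [map_sum, map_tmul, LinearMap.comp_apply, LinearMap.mul'_apply,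
    LinearMap.id_apply] at h
  rw [h]
  simp only [← tmul_sum, sum_mul_antipode_eq_smul, ← smul_tmul]
  rw [← sum_tmul, sum_counit_right_smul]

lemma ad_eq_sum {a : H} {ι : Type*} (r : Repr k a ι) (x : H) :
    ad k a x = ∑ i ∈ r.index, r.left i * x * antipode k (r.right i) := by
  simp [ad, ← r.eq, map_sum, mul_assoc]

lemma ad_one (x : H) : ad k 1 x = x := by
  simp [ad, Bialgebra.comul_one, Algebra.TensorProduct.one_def, antipode_one]

lemma ad_mul (a b x : H) : ad k (a * b) x = ad k a (ad k b x) := by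
  simp only [ad_eq_sum ((ℛ k a).mul (ℛ k b)), ad_eq_sum (ℛ k a), ad_eq_sum (ℛ k b),
    Repr.mul_index, Repr.mul_left, Repr.mul_right, antipode_mul_antidistrib, Finset.sum_product,
    Finset.mul_sum, Finset.sum_mul, mul_assoc]

variable (k) in
noncomputable def adₗ : H →ₗ[k] H →ₗ[k] H :=
  LinearMap.mk₂ k (ad k)
    (fun a b x ↦ by simp [ad, map_add])
    (fun c a x ↦ by simp [ad, map_smul])
    (fun a x y ↦ by simp [ad_eq_sum (ℛ k a), add_mul, mul_add, Finset.sum_add_distrib])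
    (fun c a x ↦ by simp [ad_eq_sum (ℛ k a), Finset.smul_sum])

@[simp] lemma adₗ_apply (a x : H) : adₗ k a x = ad k a x := rfl

lemma mul_antipode_eq_sum {Y : H} {ι : Type*} (r : Repr k Y ι) (x : H) :
    x * antipode k Y = ∑ i ∈ r.index, antipode k (r.left i) * ad k (r.right i) x := by
  have h := congr(LinearMap.mul' k H (TensorProduct.map (LinearMap.mulRight k x) (antipode k)
    $(sum_antipode_mul_tmul_eq r (fun i ↦ ℛ k (r.right i)))))
  simp only [map_sum, map_tmul, LinearMap.mulRight_apply, LinearMap.mul'_apply, one_mul] at h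
  simp only [← h, ad_eq_sum (ℛ k (r.right _)), Finset.mul_sum, mul_assoc]

lemma sum_comp_comp_map_comp_map_antipode {V Sg ι κ : Type*} [AddCommMonoid V] [Module k V]
    [AddCommMonoid Sg] [Module k Sg] [Fintype κ] (ρ : H →ₐ[k] Module.End k V) (A : V →ₗ[k] Sg)
    {Y : H} (r : Repr k Y ι) (e : ι → Module.End k Sg)
    (he : ∀ i ∈ r.index, A ∘ₗ ρ (antipode k (r.left i)) = e i ∘ₗ A)
    (Γ : κ → Module.End k Sg) (x : κ → H) :
    (∑ j, Γ j ∘ₗ A ∘ₗ ρ (x j)) ∘ₗ ρ (antipode k Y) =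
      ∑ i ∈ r.index, ∑ j, Γ j ∘ₗ e i ∘ₗ A ∘ₗ ρ (ad k (r.right i) (x j)) := by
  rw [Finset.sum_comm]
  ext v
  simp only [LinearMap.comp_apply, LinearMap.coe_sum, Finset.sum_apply]
  refine Finset.sum_congr rfl fun j _ ↦ ?_
  rw [← Module.End.mul_apply, ← map_mul, mul_antipode_eq_sum r]
  simp only [map_sum, map_mul, LinearMap.coe_sum, Finset.sum_apply, Module.End.mul_apply]
  refine Finset.sum_congr rfl fun i hi ↦ ?_
  rw [← LinearMap.comp_apply A, he i hi, LinearMap.comp_apply]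

end Hopf

section DualBasis

variable {R M N P ι : Type*} [CommSemiring R] [AddCommMonoid M] [Module R M]
  [AddCommMonoid N] [Module R N] [AddCommMonoid P] [Module R P] [Fintype ι] [DecidableEq ι]
  {B : M →ₗ[R] N →ₗ[R] R} {e : ι → M} {f : ι → N}

lemma eq_sum_smul_of_mem_span_left (hB : ∀ i j, B (e i) (f j) = if i = j then 1 else 0)
    {u : M} (hu : u ∈ Submodule.span R (Set.range e)) : u = ∑ j, B u (f j) • e j := by
  obtain ⟨c, rfl⟩ := (Submodule.mem_span_range_iff_exists_fun R).mp hu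
  simp [hB]

lemma eq_sum_smul_of_mem_span_right (hB : ∀ i j, B (e i) (f j) = if i = j then 1 else 0)
    {v : N} (hv : v ∈ Submodule.span R (Set.range f)) : v = ∑ i, B (e i) v • f i := by
  obtain ⟨c, rfl⟩ := (Submodule.mem_span_range_iff_exists_fun R).mp hv
  simp [hB]

lemma sum_apply_apply_eq_of_adjoint (hB : ∀ i j, B (e i) (f j) = if i = j then 1 else 0)
    {T : M → M} {T' : N → N} (hT : ∀ i, T (e i) ∈ Submodule.span R (Set.range e))
    (hT' : ∀ j, T' (f j) ∈ Submodule.span R (Set.range f))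
    (hTT' : ∀ i j, B (T (e i)) (f j) = B (e i) (T' (f j))) (Φ : N →ₗ[R] M →ₗ[R] P) :
    ∑ i, Φ (f i) (T (e i)) = ∑ j, Φ (T' (f j)) (e j) := by
  calc ∑ i, Φ (f i) (T (e i))
      = ∑ i, ∑ j, B (T (e i)) (f j) • Φ (f i) (e j) := by
        refine Finset.sum_congr rfl fun i _ ↦ ?_
        conv_lhs => rw [eq_sum_smul_of_mem_span_left hB (hT i)]
        simp [map_sum]
    _ = ∑ j, Φ (T' (f j)) (e j) := by
        rw [Finset.sum_comm]
        refine Finset.sum_congr rfl fun j _ ↦ ?_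
        conv_rhs => rw [eq_sum_smul_of_mem_span_right hB (hT' j)]
        simp [map_sum, hTT']

end DualBasis

section Equivariance

variable {k H M : Type*} [CommSemiring k] [Semiring H] [HopfAlgebra k H] [Semiring M]
  [Algebra k M]

variable (k) in
abbrev reprOfSum {n : ℕ} {a : H} (x₁ x₂ : Fin n → H)
    (h : comul (R := k) a = ∑ i, x₁ i ⊗ₜ[k] x₂ i) : Repr k a (Fin n) :=
  ⟨Finset.univ, x₁, x₂, h.symm⟩

def IsEquivariantAt (L : Subalgebra k H) (g γ : H → M) (u : H) : Prop :=
  ∀ y ∈ L, ∀ (n : ℕ) (y₁ y₂ : Fin n → H), (∀ t, y₁ t ∈ L ∧ y₂ t ∈ L) →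
    comul (R := k) y = ∑ t, y₁ t ⊗ₜ[k] y₂ t →
      γ (ad k y u) = ∑ t, g (y₁ t) * γ u * g (antipode k (y₂ t))

lemma isEquivariantAt_of_mem_span {L : Subalgebra k H} {g : H → M} {γ : H →ₗ[k] M}
    {ι : Type*} [Fintype ι] {v : ι → H} (hv : ∀ j, IsEquivariantAt L g γ (v j)) {u : H}
    (hu : u ∈ Submodule.span k (Set.range v)) : IsEquivariantAt L g γ u := by
  intro y hy n y₁ y₂ hmem hΔ
  obtain ⟨c, rfl⟩ := (Submodule.mem_span_range_iff_exists_fun k).mp hu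
  rw [← adₗ_apply (k := k)]
  simp only [map_sum, map_smul, adₗ_apply, hv _ y hy n y₁ y₂ hmem hΔ,
    Finset.smul_sum, Finset.sum_mul, Finset.mul_sum, smul_mul_assoc, mul_smul_comm]
  exact Finset.sum_comm

lemma mul_map_antipode_eq_sum {L : Subalgebra k H} (hSL : ∀ y ∈ L, antipode k y ∈ L)
    (hLcomul : ∀ y ∈ L, ∃ (n : ℕ) (y₁ y₂ : Fin n → H), (∀ t, y₁ t ∈ L ∧ y₂ t ∈ L) ∧
      comul (R := k) y = ∑ t, y₁ t ⊗ₜ[k] y₂ t)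
    {g : H →ₗ[k] M} (hg_mul : ∀ a ∈ L, ∀ b ∈ L, g (a * b) = g a * g b) (hg_one : g 1 = 1)
    {γ : H → M} {u : H} (hu : IsEquivariantAt L g γ u)
    {y : H} {n : ℕ} {y₁ y₂ : Fin n → H} (hmem : ∀ t, y₁ t ∈ L ∧ y₂ t ∈ L)
    (hy : comul (R := k) y = ∑ t, y₁ t ⊗ₜ[k] y₂ t) :
    γ u * g (antipode k y) = ∑ t, g (antipode k (y₁ t)) * γ (ad k (y₂ t) u) := by
  choose m v₁ v₂ hv hvΔ using fun t ↦ hLcomul (y₂ t) (hmem t).2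
  have h := congr((LinearMap.mul' k M ∘ₗ
      map (LinearMap.mulRight k (γ u) ∘ₗ g) (g ∘ₗ antipode k))
    $(sum_antipode_mul_tmul_eq (reprOfSum k y₁ y₂ hy) fun t ↦ reprOfSum k (v₁ t) (v₂ t) (hvΔ t)))
  simp only [map_sum, LinearMap.comp_apply, map_tmul, LinearMap.mulRight_apply,
    LinearMap.mul'_apply, hg_one, one_mul] at h
  rw [← h]
  refine Finset.sum_congr rfl fun t _ ↦ ?_
  rw [hu (y₂ t) (hmem t).2 _ _ _ (hv t) (hvΔ t), Finset.mul_sum]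
  refine Finset.sum_congr rfl fun s _ ↦ ?_
  rw [hg_mul _ (hSL _ (hmem t).1) _ (hv t s).1, mul_assoc, mul_assoc, mul_assoc]

lemma sum_map_ad_antipode_mul_map_antipode {L : Subalgebra k H}
    (hSL : ∀ y ∈ L, antipode k y ∈ L)
    (hLcomul : ∀ y ∈ L, ∃ (n : ℕ) (y₁ y₂ : Fin n → H), (∀ t, y₁ t ∈ L ∧ y₂ t ∈ L) ∧
      comul (R := k) y = ∑ t, y₁ t ⊗ₜ[k] y₂ t)
    {g : H →ₗ[k] M} (hg_mul : ∀ a ∈ L, ∀ b ∈ L, g (a * b) = g a * g b) (hg_one : g 1 = 1)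
    {γ : H →ₗ[k] M} {ι : Type*} [Fintype ι] {v : ι → H}
    (hstab : ∀ y ∈ L, ∀ j, ad k y (v j) ∈ Submodule.span k (Set.range v))
    (hγ : ∀ j, IsEquivariantAt L g γ (v j))
    {Y : H} {n : ℕ} {y₁ y₂ : Fin n → H} (hmem : ∀ t, y₁ t ∈ L ∧ y₂ t ∈ L)
    (hY : comul (R := k) Y = ∑ t, y₁ t ⊗ₜ[k] y₂ t) (j : ι) :
    ∑ t, γ (ad k (antipode k (y₂ t)) (v j)) * g (antipode k (y₁ t)) =
      g (antipode k Y) * γ (v j) := by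
  choose m w₁ w₂ hw hwΔ using fun t ↦ hLcomul (y₁ t) (hmem t).1
  have h := congr((LinearMap.mul' k M ∘ₗ map (g ∘ₗ antipode k) (γ ∘ₗ (adₗ k).flip (v j)))
    $(sum_tmul_mul_antipode_eq (reprOfSum k y₁ y₂ hY) fun t ↦ reprOfSum k (w₁ t) (w₂ t) (hwΔ t)))
  simp only [map_sum, LinearMap.comp_apply, map_tmul, LinearMap.flip_apply, adₗ_apply,
    LinearMap.mul'_apply, ad_one] at h
  rw [← h]
  refine Finset.sum_congr rfl fun t _ ↦ ?_
  rw [mul_map_antipode_eq_sum hSL hLcomul hg_mul hg_one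
    (isEquivariantAt_of_mem_span hγ (hstab _ (hSL _ (hmem t).2) j)) (hw t) (hwΔ t)]
  simp only [ad_mul]

end Equivariance

lemma AlgHom.exists_linearMap_extend {k H M : Type*} [Field k] [Ring H] [Algebra k H] [Ring M]
    [Algebra k M] {L : Subalgebra k H} (σ : L →ₐ[k] M) :
    ∃ g : H →ₗ[k] M, (∀ y (hy : y ∈ L), σ ⟨y, hy⟩ = g y) ∧
      (∀ a ∈ L, ∀ b ∈ L, g (a * b) = g a * g b) ∧ g 1 = 1 := by
  obtain ⟨g, hg⟩ := LinearMap.exists_extend (p := Subalgebra.toSubmodule L) σ.toLinearMap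
  have hσg : ∀ y (hy : y ∈ L), σ ⟨y, hy⟩ = g y := fun y hy ↦ (LinearMap.congr_fun hg ⟨y, hy⟩).symm
  refine ⟨g, hσg, fun a ha b hb ↦ ?_, ?_⟩
  · rw [← hσg _ (mul_mem ha hb), ← hσg a ha, ← hσg b hb, ← map_mul]
    rfl
  · rw [← hσg 1 (one_mem L)]
    exact map_one σ

/-- Well-definedness of the Dirac operator component `D₋`:  if
`A : V → Σ` intertwines the `L`-actions twisted by the antipode
(`A ∘ ρ(S(Y)) = σ(S(Y)) ∘ A` for `Y ∈ L`), then so does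
`D₋(A) := -∑ᵢ γ(Xⁱ) ∘ A ∘ ρ(Xᵢ)`, where `{Xᵢ}`, `{Xⁱ}` are dual bases
(w.r.t. an ad-invariant pairing) of `ad(L)`-stable subspaces `u₋`, `u₊` of the
Hopf algebra `H`, `L ⊆ H` is a Hopf subalgebra and
`γ` is `L`-equivariant (`γ(ad(Y)X) = σ(Y₍₁₎) γ(X) σ(S(Y₍₂₎))`). -/
theorem Dminus_well_defined (k H : Type*) [Field k] [Ring H] [HopfAlgebra k H]
    (L : Subalgebra k H)
    (hLcomul : ∀ X ∈ L, ∃ (n : ℕ) (x1 x2 : Fin n → H),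
      (∀ i, x1 i ∈ L ∧ x2 i ∈ L) ∧
      (comul (R := k) X : H ⊗[k] H) = ∑ i, x1 i ⊗ₜ[k] x2 i)
    (hSL : ∀ X ∈ L, antipode (R := k) X ∈ L)
    (V Sg : Type*) [AddCommGroup V] [Module k V] [AddCommGroup Sg] [Module k Sg]
    (ρ : H →ₐ[k] Module.End k V) (σ : ↥L →ₐ[k] Module.End k Sg)
    (B : H →ₗ[k] H →ₗ[k] k)
    (hinv : ∀ Z X Y : H, B (ad k Z X) Y = B X (ad k (antipode (R := k) Z) Y))
    (m : ℕ) (X Xup : Fin m → H)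
    (hdual : ∀ i j, B (X i) (Xup j) = if i = j then 1 else 0)
    (humstab : ∀ Y ∈ L, ∀ i, ad k Y (X i) ∈ Submodule.span k (Set.range X))
    (hupstab : ∀ Y ∈ L, ∀ j, ad k Y (Xup j) ∈ Submodule.span k (Set.range Xup))
    (γ : H →ₗ[k] Module.End k Sg)
    (hγ : ∀ (Y : H) (_ : Y ∈ L) (n : ℕ) (y1 y2 : Fin n → H)
      (h1 : ∀ t, y1 t ∈ L) (h2 : ∀ t, y2 t ∈ L),
      (comul (R := k) Y : H ⊗[k] H) = ∑ t, y1 t ⊗ₜ[k] y2 t →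
      ∀ j, γ (ad k Y (Xup j)) =
        ∑ t, σ ⟨y1 t, h1 t⟩ * γ (Xup j) * σ ⟨antipode (R := k) (y2 t), hSL _ (h2 t)⟩)
    (A : V →ₗ[k] Sg)
    (hA : ∀ (Y : H) (hY : Y ∈ L),
      A ∘ₗ (ρ (antipode (R := k) Y) : V →ₗ[k] V) =
        (σ ⟨antipode (R := k) Y, hSL Y hY⟩ : Sg →ₗ[k] Sg) ∘ₗ A) :
    ∀ (Y : H) (hY : Y ∈ L),
      (-∑ i, (γ (Xup i) : Sg →ₗ[k] Sg) ∘ₗ A ∘ₗ (ρ (X i) : V →ₗ[k] V)) ∘ₗ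
          (ρ (antipode (R := k) Y) : V →ₗ[k] V) =
        (σ ⟨antipode (R := k) Y, hSL Y hY⟩ : Sg →ₗ[k] Sg) ∘ₗ
          (-∑ i, (γ (Xup i) : Sg →ₗ[k] Sg) ∘ₗ A ∘ₗ (ρ (X i) : V →ₗ[k] V)) := by
  intro Y hY
  obtain ⟨n, y₁, y₂, hmem, hYΔ⟩ := hLcomul Y hY
  obtain ⟨g, hσg, hg_mul, hg_one⟩ := σ.exists_linearMap_extend
  have hγg : ∀ j, IsEquivariantAt L g γ (Xup j) := fun j y hy _ z₁ z₂ hz hzΔ ↦ by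
    simp only [hγ y hy _ z₁ z₂ (fun t ↦ (hz t).1) (fun t ↦ (hz t).2) hzΔ j, hσg]
  rw [LinearMap.neg_comp, LinearMap.comp_neg, neg_inj, hσg]
  calc _ = ∑ t, ∑ i, γ (Xup i) ∘ₗ g (antipode k (y₁ t)) ∘ₗ A ∘ₗ ρ (ad k (y₂ t) (X i)) :=
        sum_comp_comp_map_comp_map_antipode ρ A (reprOfSum k y₁ y₂ hYΔ) _
          (fun t _ ↦ by rw [hA _ (hmem t).1, hσg]) _ X
    _ = ∑ t, ∑ j, γ (ad k (antipode k (y₂ t)) (Xup j)) ∘ₗ g (antipode k (y₁ t)) ∘ₗ A ∘ₗ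
          ρ (X j) := by
        refine Finset.sum_congr rfl fun t _ ↦ ?_
        exact sum_apply_apply_eq_of_adjoint hdual (humstab _ (hmem t).2)
          (hupstab _ (hSL _ (hmem t).2)) (fun i j ↦ hinv _ _ _)
          ((LinearMap.llcomp k V Sg Sg).compl₁₂ γ
            (LinearMap.llcomp k V V Sg (g (antipode k (y₁ t)) ∘ₗ A) ∘ₗ ρ.toLinearMap))
    _ = ∑ j, g (antipode k Y) ∘ₗ γ (Xup j) ∘ₗ A ∘ₗ ρ (X j) := by
        rw [Finset.sum_comm]
        refine Finset.sum_congr rfl fun j _ ↦ ?_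
        rw [← LinearMap.comp_assoc, ← Module.End.mul_eq_comp,
          ← sum_map_ad_antipode_mul_map_antipode hSL hLcomul hg_mul hg_one hupstab hγg hmem hYΔ j]
        ext v
        simp
    _ = _ := by
        ext v
        simp
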